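/- arXiv:1802.07092 — 2 statements merged into one kernel-verified Lean document; each statement's English description precedes it below -/
import Mathlib

section
/- Let (G,+) be an abelian topological group and let x ↦ x* be a continuous map from G to G. Let Ω ⊆ G be an open subset, let S = Ω + Ω* = {x + y* : x, y ∈ Ω}, and let f : S → ℂ be a positive definite function, i.e. k(x,y) := f(x + y*) is a positive definite kernel on Ω. Then f is continuous on S (with the subspace topology) if and only if Re(f) is continuous at every point of D_Ω(S) = {x + x* : x ∈ Ω} (as a function on S with the subspace topology). -/
/-!
Positive definiteness of `k(x, y) = f(x + y*)` on `Ω` gives the Cauchy–Schwarz type bound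
`|k(x, y) - k(x₀, y)|² ≤ (k(x, x) + k(x₀, x₀) - 2 Re k(x, x₀)) · k(y, y)`, read off from the
discriminant of the form at the three points `x, x₀, y`. Continuity of `Re f` at `x₀ + x₀*` makes
the first factor tend to `0` as `x → x₀`, so `x ↦ f(x + y₀*)` is continuous at `x₀`; as `Ω` is
open, translating by `y₀*` gives continuity of `f` at `x₀ + y₀*`.
-/

open Filter Topology ComplexOrder

def IsPosDefKernel {X : Type*} (k : X → X → ℂ) : Prop :=
  ∀ (n : ℕ) (x : Fin n → X) (ξ : Fin n → ℂ),
    0 ≤ ∑ i, ∑ j, k (x i) (x j) * ξ i * (starRingEnd ℂ) (ξ j)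

/-- The squared distance between `x` and `y` in the reproducing kernel Hilbert space of `k`. -/
def kernelDistSq {X : Type*} (k : X → X → ℂ) (x y : X) : ℝ :=
  (k x x).re + (k y y).re - 2 * (k x y).re

namespace IsPosDefKernel

variable {X : Type*} {k : X → X → ℂ}

theorem diag_nonneg (hk : IsPosDefKernel k) (x : X) : 0 ≤ k x x := by
  simpa using hk 1 ![x] ![1]

theorem conj_symm (hk : IsPosDefKernel k) (x y : X) : (starRingEnd ℂ) (k x y) = k y x := by
  have hx := Complex.nonneg_iff.1 (hk.diag_nonneg x)
  have hy := Complex.nonneg_iff.1 (hk.diag_nonneg y)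
  have h₁ := Complex.nonneg_iff.1 (hk 2 ![x, y] ![1, 1])
  have h₂ := Complex.nonneg_iff.1 (hk 2 ![x, y] ![1, Complex.I])
  simp [Fin.sum_univ_two] at h₁ h₂
  apply Complex.ext <;> simp <;> linarith

theorem kernelDistSq_nonneg (hk : IsPosDefKernel k) (x y : X) : 0 ≤ kernelDistSq k x y := by
  have h := (Complex.nonneg_iff.1 (hk 2 ![x, y] ![1, -1])).1
  simp [Fin.sum_univ_two, ← hk.conj_symm x y] at h
  unfold kernelDistSq
  linarith

theorem normSq_sub_le (hk : IsPosDefKernel k) (x x' y : X) :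
    Complex.normSq (k x y - k x' y) ≤ kernelDistSq k x x' * (k y y).re := by
  set c := k x y - k x' y
  obtain ⟨hB, hBim⟩ := Complex.nonneg_iff.1 (hk.diag_nonneg y)
  -- with coefficients `(s, -s, c)` at `(x, x', y)` the cross terms add up to `2 s |c|²`
  have hquad : ∀ s : ℝ, 0 ≤ kernelDistSq k x x' * (s * s) + 2 * Complex.normSq c * s
      + Complex.normSq c * (k y y).re := by
    intro s
    have h := (Complex.nonneg_iff.1 (hk 3 ![x, x', y] ![s, -s, c])).1
    simp [Fin.sum_univ_three, ← hk.conj_symm x y, ← hk.conj_symm x x', ← hk.conj_symm x' y,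
      ← hBim, c] at h
    simp only [c, kernelDistSq, Complex.normSq_apply, Complex.sub_re, Complex.sub_im]
    linarith
  have hdisc := discrim_le_zero hquad
  unfold discrim at hdisc
  nlinarith [Complex.normSq_nonneg c, mul_nonneg (hk.kernelDistSq_nonneg x x') hB]

theorem tendsto_left (hk : IsPosDefKernel k) {x₀ : X} {l : Filter X}
    (h : Tendsto (fun x => kernelDistSq k x x₀) l (𝓝 0)) (y : X) :
    Tendsto (fun x => k x y) l (𝓝 (k x₀ y)) := by
  have hsq : Tendsto (fun x => ‖k x y - k x₀ y‖ ^ 2) l (𝓝 0) := by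
    refine squeeze_zero (fun _ => sq_nonneg _) (fun x => ?_)
      (by simpa using h.mul_const (k y y).re)
    rw [← Complex.normSq_eq_norm_sq]
    exact hk.normSq_sub_le x x₀ y
  rw [tendsto_iff_norm_sub_tendsto_zero]
  simpa using hsq.sqrt

end IsPosDefKernel

section AddStar

variable {G : Type*} [AddCommGroup G] [TopologicalSpace G] {star : G → G} {Ω : Set G}
  {f : G → ℂ}

theorem tendsto_kernelDistSq_add_star [ContinuousAdd G] (hstar : Continuous star) {x₀ : Ω}
    (hdiag : ContinuousWithinAt (fun z => (f z).re) {z | ∃ x ∈ Ω, ∃ y ∈ Ω, z = x + star y}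
      (x₀ + star x₀)) :
    Tendsto (fun x : Ω => kernelDistSq (fun x y : Ω => f (x + star y)) x x₀) (𝓝 x₀) (𝓝 0) := by
  have hcomp : ∀ g : Ω → G, Continuous g → g x₀ = x₀ + star x₀ →
      (∀ x, g x ∈ {z | ∃ x ∈ Ω, ∃ y ∈ Ω, z = x + star y}) →
      Tendsto (fun x => (f (g x)).re) (𝓝 x₀) (𝓝 (f (x₀ + star x₀)).re) := fun g hg hgx₀ hgS =>
    hdiag.tendsto.comp (tendsto_nhdsWithin_iff.2 ⟨hgx₀ ▸ hg.tendsto x₀, .of_forall hgS⟩)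
  have hval : Continuous fun x : Ω => (x : G) := continuous_subtype_val
  have hdiag' := hcomp (fun x => x + star x) (hval.add (hstar.comp hval)) rfl
    fun x => ⟨x, x.2, x, x.2, rfl⟩
  have hleft := hcomp (fun x => x + star x₀) (hval.add continuous_const) rfl
    fun x => ⟨x, x.2, x₀, x₀.2, rfl⟩
  unfold kernelDistSq
  convert (hdiag'.add_const (f (x₀ + star x₀)).re).sub (hleft.const_mul 2) using 2
  ring

theorem continuousAt_add_star [IsTopologicalAddGroup G] (hstar : Continuous star)
    (hΩ : IsOpen Ω) (hk : IsPosDefKernel fun x y : Ω => f (x + star y)) {x₀ y₀ : G}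
    (hx₀ : x₀ ∈ Ω) (hy₀ : y₀ ∈ Ω)
    (hdiag : ContinuousWithinAt (fun z => (f z).re) {z | ∃ x ∈ Ω, ∃ y ∈ Ω, z = x + star y}
      (x₀ + star x₀)) :
    ContinuousAt f (x₀ + star y₀) := by
  have hleft : Tendsto (fun x : Ω => f (x + star y₀)) (𝓝 ⟨x₀, hx₀⟩) (𝓝 (f (x₀ + star y₀))) :=
    hk.tendsto_left (tendsto_kernelDistSq_add_star (x₀ := ⟨x₀, hx₀⟩) hstar hdiag) ⟨y₀, hy₀⟩
  have hleft' : ContinuousAt (fun x => f (x + star y₀)) x₀ := by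
    rwa [ContinuousAt, ← hΩ.nhdsWithin_eq hx₀, tendsto_nhdsWithin_iff_subtype hx₀]
  simpa [Function.comp_def] using
    hleft'.comp_of_eq (continuous_sub_right (star y₀)).continuousAt (add_sub_cancel_right _ _)

end AddStar

/-- For a positive definite function `f` on `S = Ω + Ω*` over an abelian
topological group, `f` is continuous on `S` iff `Re f` is continuous (within `S`) at every
point of the diagonal `D_Ω(S) = {x + x* : x ∈ Ω}`. -/
theorem stmt3 {G : Type*} [AddCommGroup G] [TopologicalSpace G] [IsTopologicalAddGroup G]
    (star : G → G) (hstar : Continuous star)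
    (Ω : Set G) (hΩ : IsOpen Ω)
    (S : Set G) (hS : S = {z | ∃ x ∈ Ω, ∃ y ∈ Ω, z = x + star y})
    (f : G → ℂ)
    (hpd : ∀ (n : ℕ) (x : Fin n → G), (∀ i, x i ∈ Ω) → ∀ ξ : Fin n → ℂ,
      0 ≤ ∑ i, ∑ j, f (x i + star (x j)) * ξ i * (starRingEnd ℂ) (ξ j)) :
    ContinuousOn f S ↔
      ∀ x ∈ Ω, ContinuousWithinAt (fun z => (f z).re) S (x + star x) := by
  subst hS
  have hk : IsPosDefKernel fun x y : Ω => f (x + star y) := fun n x =>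
    hpd n (fun i => x i) fun i => (x i).2
  refine ⟨fun h x hx => Complex.continuous_re.continuousAt.comp_continuousWithinAt
    (h _ ⟨x, hx, x, hx, rfl⟩), fun hdiag => ?_⟩
  rintro _ ⟨x₀, hx₀, y₀, hy₀, rfl⟩
  exact (continuousAt_add_star hstar hΩ hk hx₀ hy₀ (hdiag x₀ hx₀)).continuousWithinAt
end

section
/- Let Ω ⊆ ℝ be an open set and let k : Ω × Ω → ℂ be a positive definite kernel of class S_n(Ω²). Then for every 0 ≤ m ≤ n, the function k_m(x,y) := ∂^{2m} k / ∂y^m ∂x^m (the m-th partial derivative in x followed by the m-th partial derivative in y) is a positive definite kernel on Ω of class S_{n−m}(Ω²). -/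
open Filter Topology ComplexOrder

/-- Partial derivative in the first variable. -/
noncomputable def pderiv1 (k : ℝ × ℝ → ℂ) : ℝ × ℝ → ℂ :=
  fun p => deriv (fun u => k (u, p.2)) p.1

/-- Partial derivative in the second variable. -/
noncomputable def pderiv2 (k : ℝ × ℝ → ℂ) : ℝ × ℝ → ℂ :=
  fun p => deriv (fun v => k (p.1, v)) p.2

/-- `k` is of class `S_n(U)`: for all `m₁, m₂ ≤ n`, the iterated partial derivative
`∂^{m₁+m₂} k / ∂v^{m₂} ∂u^{m₁}` (first `m₁` derivatives in the first variable, then `m₂`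
derivatives in the second) exists at every point of `U` and is continuous on `U`. -/
def IsClassSn (n : ℕ) (U : Set (ℝ × ℝ)) (k : ℝ × ℝ → ℂ) : Prop :=
  (∀ m₁ < n, ∀ p ∈ U, DifferentiableAt ℝ (fun u => (pderiv1^[m₁] k) (u, p.2)) p.1) ∧
  (∀ m₁ ≤ n, ∀ m₂ < n, ∀ p ∈ U,
    DifferentiableAt ℝ (fun v => (pderiv2^[m₂] (pderiv1^[m₁] k)) (p.1, v)) p.2) ∧
  (∀ m₁ ≤ n, ∀ m₂ ≤ n, ContinuousOn (pderiv2^[m₂] (pderiv1^[m₁] k)) U)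

/-- `k` is a positive definite kernel on `Ω`. -/
def IsPosDefKernelOn {E : Type*} (Ω : Set E) (k : E × E → ℂ) : Prop :=
  ∀ (n : ℕ) (x : Fin n → E), (∀ i, x i ∈ Ω) → ∀ ξ : Fin n → ℂ,
    0 ≤ ∑ i, ∑ j, k (x i, x j) * ξ i * (starRingEnd ℂ) (ξ j)

/-!
Everything rests on one estimate: if `∂₁f` exists and `∂₂∂₁f` is continuous near `p`, two
applications of the mean value inequality give `mixedDiff f p h k = h k ∂₂∂₁f(p) + o(|h| |k|)`.
Letting `k → 0` first yields Schwarz's theorem `∂₁∂₂f(p) = ∂₂∂₁f(p)` in Peano's form (the existence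
of `∂₁∂₂f` is part of the conclusion), so on `Ω × Ω` the iterated partial derivatives of `k` may be
taken in any order; this gives the class `S_{n-m}`. Taking `h = k` shows that `k_{m+1}(x, y)` is
the limit of `mixedDiff k_m (x, y) h h / h²`. Each of these kernels is positive definite, being the
quadratic form of `k_m` at the points `xᵢ + h, xᵢ` with weights `ξᵢ, -ξᵢ`, and positive
definiteness passes to pointwise limits.
-/

open Metric

section MixedDiff

variable {E : Type*} [NormedAddCommGroup E] [NormedSpace ℝ E]

def mixedDiff (f : ℝ × ℝ → E) (p : ℝ × ℝ) (h k : ℝ) : E :=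
  f (p.1 + h, p.2 + k) - f (p.1 + h, p.2) - f (p.1, p.2 + k) + f p

theorem norm_mixedDiff_sub_smul_le {f f₁ f₁₂ : ℝ × ℝ → E} {p : ℝ × ℝ} {r δ : ℝ} (c : E)
    (hf₁ : ∀ q ∈ ball p r, HasDerivAt (fun u => f (u, q.2)) (f₁ q) q.1)
    (hf₁₂ : ∀ q ∈ ball p r, HasDerivAt (fun v => f₁ (q.1, v)) (f₁₂ q) q.2)
    (hc : ∀ q ∈ ball p r, ‖f₁₂ q - c‖ ≤ δ) {h k : ℝ} (hh : |h| < r) (hk : |k| < r) :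
    ‖mixedDiff f p h k - (h * k) • c‖ ≤ δ * |k| * |h| := by
  obtain ⟨x, y⟩ := p
  simp only [← ball_prod_same, Set.forall_prod_set] at hf₁ hf₁₂ hc
  have hr : 0 < r := (abs_nonneg h).trans_lt hh
  have hyk : y + k ∈ ball y r := by simpa [Real.dist_eq] using hk
  have hxh : x + h ∈ ball x r := by simpa [Real.dist_eq] using hh
  have hinner : ∀ s ∈ ball x r, ‖f₁ (s, y + k) - f₁ (s, y) - k • c‖ ≤ δ * |k| := by
    intro s hs
    have := (convex_ball y r).norm_image_sub_le_of_norm_hasDerivWithin_le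
      (f := fun t => f₁ (s, t) - t • c) (f' := fun t => f₁₂ (s, t) - c)
      (fun t ht => ((hf₁₂ s hs t ht).sub ((hasDerivAt_id t).smul_const c)).hasDerivWithinAt
        |>.congr_deriv (by simp))
      (fun t ht => hc s hs t ht) (mem_ball_self hr) hyk
    simp only [add_sub_cancel_left, Real.norm_eq_abs, add_smul] at this
    convert this using 2
    abel
  have := (convex_ball x r).norm_image_sub_le_of_norm_hasDerivWithin_le
    (f := fun s => f (s, y + k) - f (s, y) - (s * k) • c)
    (f' := fun s => f₁ (s, y + k) - f₁ (s, y) - k • c)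
    (fun s hs => (((hf₁ s hs (y + k) hyk).sub (hf₁ s hs y (mem_ball_self hr))).sub
      (((hasDerivAt_id s).mul_const k).smul_const c)).hasDerivWithinAt.congr_deriv (by simp))
    hinner (mem_ball_self hr) hxh
  simp only [add_sub_cancel_left, Real.norm_eq_abs, add_mul, add_smul] at this
  convert this using 2
  simp only [mixedDiff]
  abel

theorem exists_norm_mixedDiff_sub_smul_le {f f₁ f₁₂ : ℝ × ℝ → E} {p : ℝ × ℝ}
    (hf₁ : ∀ᶠ q in 𝓝 p, HasDerivAt (fun u => f (u, q.2)) (f₁ q) q.1)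
    (hf₁₂ : ∀ᶠ q in 𝓝 p, HasDerivAt (fun v => f₁ (q.1, v)) (f₁₂ q) q.2)
    (hc : ContinuousAt f₁₂ p) {δ : ℝ} (hδ : 0 < δ) :
    ∃ r > 0, ∀ h k : ℝ, |h| < r → |k| < r →
      ‖mixedDiff f p h k - (h * k) • f₁₂ p‖ ≤ δ * |k| * |h| := by
  obtain ⟨r, hr, hball⟩ := eventually_nhds_iff_ball.1
    ((hf₁.and hf₁₂).and (hc.eventually (closedBall_mem_nhds _ hδ)))
  refine ⟨r, hr, fun h k hh hk => norm_mixedDiff_sub_smul_le _ (fun q hq => (hball q hq).1.1)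
    (fun q hq => (hball q hq).1.2) (fun q hq => ?_) hh hk⟩
  simpa [dist_eq_norm] using (hball q hq).2

theorem smul_sub_smul_eq_inv_smul {a : ℝ} (ha : a ≠ 0) (b : ℝ) (x y : E) :
    a⁻¹ • x - b • y = a⁻¹ • (x - (b * a) • y) := by
  rw [smul_sub, smul_smul, mul_comm b, ← mul_assoc, inv_mul_cancel₀ ha, one_mul]

theorem hasDerivAt_mixed_partial_symm {f f₁ f₂ f₁₂ : ℝ × ℝ → E} {p : ℝ × ℝ}
    (hf₁ : ∀ᶠ q in 𝓝 p, HasDerivAt (fun u => f (u, q.2)) (f₁ q) q.1)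
    (hf₂ : ∀ᶠ q in 𝓝 p, HasDerivAt (fun v => f (q.1, v)) (f₂ q) q.2)
    (hf₁₂ : ∀ᶠ q in 𝓝 p, HasDerivAt (fun v => f₁ (q.1, v)) (f₁₂ q) q.2)
    (hc : ContinuousAt f₁₂ p) :
    HasDerivAt (fun u => f₂ (u, p.2)) (f₁₂ p) p.1 := by
  obtain ⟨x, y⟩ := p
  rw [hasDerivAt_iff_isLittleO_nhds_zero, Asymptotics.isLittleO_iff]
  intro δ hδ
  obtain ⟨r, hr, hest⟩ := exists_norm_mixedDiff_sub_smul_le hf₁ hf₁₂ hc hδ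
  have hline : Tendsto (fun h : ℝ => (x + h, y)) (𝓝 0) (𝓝 (x, y)) :=
    ((continuous_const.add continuous_id).prodMk continuous_const).tendsto' 0 _ (by simp)
  filter_upwards [hline.eventually hf₂, ball_mem_nhds 0 hr] with h hh hhr
  rw [mem_ball_zero_iff, Real.norm_eq_abs] at hhr
  have hslope : Tendsto (fun k : ℝ => k⁻¹ • mixedDiff f (x, y) h k - h • f₁₂ (x, y)) (𝓝[≠] 0)
      (𝓝 (f₂ (x + h, y) - f₂ (x, y) - h • f₁₂ (x, y))) := by
    refine ((hh.tendsto_slope_zero.sub hf₂.self_of_nhds.tendsto_slope_zero).sub_const _).congr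
      fun k => ?_
    simp only [mixedDiff, ← smul_sub]
    congr 2
    abel
  refine le_of_tendsto hslope.norm ?_
  filter_upwards [self_mem_nhdsWithin, mem_nhdsWithin_of_mem_nhds (ball_mem_nhds 0 hr)]
    with k (hk0 : k ≠ 0) hkr
  rw [mem_ball_zero_iff, Real.norm_eq_abs] at hkr
  rw [smul_sub_smul_eq_inv_smul hk0, norm_smul, norm_inv, Real.norm_eq_abs, Real.norm_eq_abs,
    inv_mul_le_iff₀ (abs_pos.2 hk0)]
  exact (hest h k hhr hkr).trans_eq (by ring)

theorem tendsto_inv_sq_smul_mixedDiff {f f₁ f₁₂ : ℝ × ℝ → E} {p : ℝ × ℝ}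
    (hf₁ : ∀ᶠ q in 𝓝 p, HasDerivAt (fun u => f (u, q.2)) (f₁ q) q.1)
    (hf₁₂ : ∀ᶠ q in 𝓝 p, HasDerivAt (fun v => f₁ (q.1, v)) (f₁₂ q) q.2)
    (hc : ContinuousAt f₁₂ p) :
    Tendsto (fun h : ℝ => (h ^ 2)⁻¹ • mixedDiff f p h h) (𝓝[≠] 0) (𝓝 (f₁₂ p)) := by
  rw [Metric.tendsto_nhds]
  intro ε hε
  obtain ⟨r, hr, hest⟩ := exists_norm_mixedDiff_sub_smul_le hf₁ hf₁₂ hc (half_pos hε)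
  filter_upwards [self_mem_nhdsWithin, mem_nhdsWithin_of_mem_nhds (ball_mem_nhds 0 hr)]
    with h (hh0 : h ≠ 0) hhr
  rw [mem_ball_zero_iff, Real.norm_eq_abs] at hhr
  have hsq : 0 < h ^ 2 := by positivity
  rw [dist_eq_norm, ← one_smul ℝ (f₁₂ p), smul_sub_smul_eq_inv_smul hsq.ne', norm_smul, norm_inv,
    Real.norm_eq_abs, abs_of_pos hsq, inv_mul_lt_iff₀ hsq, one_mul, sq]
  calc _ ≤ ε / 2 * |h| * |h| := hest h h hhr hhr
    _ = ε / 2 * (h * h) := by rw [mul_assoc, abs_mul_abs_self]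
    _ < h * h * ε := by nlinarith [mul_self_pos.2 hh0]

end MixedDiff

namespace IsPosDefKernelOn

variable {α : Type*} {Ω Ω' : Set α} {K : α × α → ℂ}

theorem mono (hK : IsPosDefKernelOn Ω K) (h : Ω' ⊆ Ω) : IsPosDefKernelOn Ω' K :=
  fun N x hx ξ => hK N x (fun i => h (hx i)) ξ

theorem smul (hK : IsPosDefKernelOn Ω K) {c : ℝ} (hc : 0 ≤ c) : IsPosDefKernelOn Ω (c • K) := by
  intro N x hx ξ
  simp only [Pi.smul_apply, Complex.real_smul, mul_assoc, ← Finset.mul_sum]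
  simp only [← mul_assoc]
  exact mul_nonneg (Complex.zero_le_real.2 hc) (hK N x hx ξ)

theorem sum_nonneg {ι : Type*} [Fintype ι] (hK : IsPosDefKernelOn Ω K) (x : ι → α)
    (hx : ∀ i, x i ∈ Ω) (ξ : ι → ℂ) :
    0 ≤ ∑ i, ∑ j, K (x i, x j) * ξ i * (starRingEnd ℂ) (ξ j) := by
  let e := (Fintype.equivFin ι).symm
  convert hK _ (x ∘ e) (fun i => hx _) (ξ ∘ e) using 1
  rw [← e.sum_comp]
  exact Finset.sum_congr rfl fun i _ => (e.sum_comp _).symm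

theorem of_tendsto {ι : Type*} {l : Filter ι} [l.NeBot] {F : ι → α × α → ℂ}
    (hF : ∀ x ∈ Ω, ∀ y ∈ Ω, Tendsto (fun a => F a (x, y)) l (𝓝 (K (x, y))))
    (hpos : ∀ (N : ℕ) (x : Fin N → α), (∀ i, x i ∈ Ω) →
      ∀ᶠ a in l, IsPosDefKernelOn (Set.range x) (F a)) :
    IsPosDefKernelOn Ω K := fun N x hx ξ =>
  ge_of_tendsto (tendsto_finsetSum _ fun i _ => tendsto_finsetSum _ fun j _ =>
      ((hF _ (hx i) _ (hx j)).mul_const _).mul_const _)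
    ((hpos N x hx).mono fun _ ha => ha N x (fun i => ⟨i, rfl⟩) ξ)

theorem mixedDiff {K : ℝ × ℝ → ℂ} {Ω : Set ℝ} (hK : IsPosDefKernelOn Ω K) (h : ℝ) :
    IsPosDefKernelOn {x | x ∈ Ω ∧ x + h ∈ Ω} (fun p => _root_.mixedDiff K p h h) := by
  intro N x hx ξ
  have := hK.sum_nonneg (Sum.elim (fun i => x i + h) x)
    (by rintro (i | i); exacts [(hx i).2, (hx i).1]) (Sum.elim ξ (-ξ))
  simp only [Fintype.sum_sum_type, Sum.elim_inl, Sum.elim_inr, Pi.neg_apply, map_neg,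
    ← Finset.sum_add_distrib] at this
  refine this.trans_eq (Finset.sum_congr rfl fun i _ => Finset.sum_congr rfl fun j _ => ?_)
  simp only [_root_.mixedDiff]
  ring

end IsPosDefKernelOn

section Slices

variable {α β γ : Type*} [TopologicalSpace α] [TopologicalSpace β] {f g : α × β → γ}
  {U : Set (α × β)} {p : α × β}

theorem Set.EqOn.eventuallyEq_slice_fst (h : Set.EqOn f g U) (hU : IsOpen U) (hp : p ∈ U) :
    (fun u => f (u, p.2)) =ᶠ[𝓝 p.1] fun u => g (u, p.2) :=
  ((continuous_id.prodMk continuous_const).tendsto' p.1 p rfl).eventually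
    (h.eventuallyEq_of_mem (hU.mem_nhds hp))

theorem Set.EqOn.eventuallyEq_slice_snd (h : Set.EqOn f g U) (hU : IsOpen U) (hp : p ∈ U) :
    (fun v => f (p.1, v)) =ᶠ[𝓝 p.2] fun v => g (p.1, v) :=
  ((continuous_const.prodMk continuous_id).tendsto' p.2 p rfl).eventually
    (h.eventuallyEq_of_mem (hU.mem_nhds hp))

end Slices

theorem Set.EqOn.pderiv1 {f g : ℝ × ℝ → ℂ} {U : Set (ℝ × ℝ)} (h : Set.EqOn f g U)
    (hU : IsOpen U) : Set.EqOn (pderiv1 f) (pderiv1 g) U :=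
  fun _ hp => (h.eventuallyEq_slice_fst hU hp).deriv_eq

theorem Set.EqOn.pderiv2_iterate {f g : ℝ × ℝ → ℂ} {U : Set (ℝ × ℝ)} (h : Set.EqOn f g U)
    (hU : IsOpen U) (j : ℕ) : Set.EqOn (pderiv2^[j] f) (pderiv2^[j] g) U := by
  induction j with
  | zero => exact h
  | succ j ih =>
    intro p hp
    simp only [Function.iterate_succ_apply']
    exact (ih.eventuallyEq_slice_snd hU hp).deriv_eq

namespace IsClassSn

variable {n : ℕ} {U : Set (ℝ × ℝ)} {k : ℝ × ℝ → ℂ}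

theorem hasDerivAt_snd (hs : IsClassSn n U k) {a b : ℕ} (ha : a ≤ n) (hb : b < n)
    {p : ℝ × ℝ} (hp : p ∈ U) :
    HasDerivAt (fun v => pderiv2^[b] (pderiv1^[a] k) (p.1, v))
      (pderiv2^[b + 1] (pderiv1^[a] k) p) p.2 := by
  rw [Function.iterate_succ_apply']
  exact (hs.2.1 a ha b hb p hp).hasDerivAt

theorem hasDerivAt_fst (hs : IsClassSn n U k) (hU : IsOpen U) {a b : ℕ} (ha : a < n)
    (hb : b ≤ n) {p : ℝ × ℝ} (hp : p ∈ U) :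
    HasDerivAt (fun u => pderiv2^[b] (pderiv1^[a] k) (u, p.2))
      (pderiv2^[b] (pderiv1^[a + 1] k) p) p.1 := by
  induction b generalizing p with
  | zero =>
    rw [Function.iterate_succ_apply']
    exact (hs.1 a ha p hp).hasDerivAt
  | succ b ih =>
    have hUp := hU.mem_nhds hp
    exact hasDerivAt_mixed_partial_symm
      (eventually_of_mem hUp fun q hq => ih (by omega) hq)
      (eventually_of_mem hUp fun q hq => hs.hasDerivAt_snd ha.le (by omega) hq)
      (eventually_of_mem hUp fun q hq => hs.hasDerivAt_snd ha (by omega) hq)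
      ((hs.2.2 (a + 1) ha (b + 1) hb).continuousAt hUp)

theorem eqOn_pderiv1_iterate (hs : IsClassSn n U k) (hU : IsOpen U) {a b j : ℕ}
    (haj : a + j ≤ n) (hb : b ≤ n) :
    Set.EqOn (pderiv1^[j] (pderiv2^[b] (pderiv1^[a] k))) (pderiv2^[b] (pderiv1^[a + j] k)) U := by
  induction j with
  | zero => exact fun _ _ => rfl
  | succ j ih =>
    intro p hp
    rw [Function.iterate_succ_apply', (ih (by omega)).pderiv1 hU hp]
    exact (hs.hasDerivAt_fst hU (by omega) hb hp).deriv

theorem eqOn_mixed (hs : IsClassSn n U k) (hU : IsOpen U) {m m₁ : ℕ} (m₂ : ℕ)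
    (hm : m ≤ n) (hm₁ : m + m₁ ≤ n) :
    Set.EqOn (pderiv2^[m₂] (pderiv1^[m₁] (pderiv2^[m] (pderiv1^[m] k))))
      (pderiv2^[m + m₂] (pderiv1^[m + m₁] k)) U := by
  rw [add_comm m, Function.iterate_add_apply]
  exact Set.EqOn.pderiv2_iterate (hs.eqOn_pderiv1_iterate hU hm₁ hm) hU m₂

theorem mixed_pderiv (hs : IsClassSn n U k) (hU : IsOpen U) {m : ℕ} (hm : m ≤ n) :
    IsClassSn (n - m) U (pderiv2^[m] (pderiv1^[m] k)) := by
  refine ⟨fun m₁ hm₁ p hp => ?_, fun m₁ hm₁ m₂ hm₂ p hp => ?_, fun m₁ hm₁ m₂ hm₂ => ?_⟩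
  · exact ((hs.eqOn_mixed hU 0 hm (by omega)).eventuallyEq_slice_fst hU hp).differentiableAt_iff.2
      (hs.hasDerivAt_fst hU (by omega) hm hp).differentiableAt
  · exact ((hs.eqOn_mixed hU m₂ hm (by omega)).eventuallyEq_slice_snd hU hp).differentiableAt_iff.2
      (hs.hasDerivAt_snd (by omega) (by omega) hp).differentiableAt
  · exact (hs.2.2 _ (by omega) _ (by omega)).congr (hs.eqOn_mixed hU m₂ hm (by omega))

end IsClassSn

theorem IsPosDefKernelOn.mixed_pderiv_succ {Ω : Set ℝ} (hΩ : IsOpen Ω) {n : ℕ}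
    {k : ℝ × ℝ → ℂ} (hs : IsClassSn n (Ω ×ˢ Ω) k) {a : ℕ} (ha : a < n)
    (hpd : IsPosDefKernelOn Ω (pderiv2^[a] (pderiv1^[a] k))) :
    IsPosDefKernelOn Ω (pderiv2^[a + 1] (pderiv1^[a + 1] k)) := by
  have hU := hΩ.prod hΩ
  refine of_tendsto (l := 𝓝[≠] (0 : ℝ))
    (F := fun h => (h ^ 2)⁻¹ • fun p => _root_.mixedDiff (pderiv2^[a] (pderiv1^[a] k)) p h h)
    (fun x hx y hy => ?_) (fun N x hx => ?_)
  · have hUp := hU.mem_nhds (Set.mk_mem_prod hx hy)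
    exact tendsto_inv_sq_smul_mixedDiff
      (eventually_of_mem hUp fun q hq => hs.hasDerivAt_fst hU ha ha.le hq)
      (eventually_of_mem hUp fun q hq => hs.hasDerivAt_snd ha ha hq)
      ((hs.2.2 _ ha _ ha).continuousAt hUp)
  · have hshift : ∀ᶠ h in 𝓝 (0 : ℝ), ∀ i, x i + h ∈ Ω := eventually_all.2 fun i =>
      ((continuous_const_add (x i)).tendsto' 0 (x i) (add_zero _)).eventually
        (hΩ.mem_nhds (hx i))
    filter_upwards [nhdsWithin_le_nhds hshift] with h hh
    exact ((hpd.mixedDiff h).mono (by rintro _ ⟨i, rfl⟩; exact ⟨hx i, hh i⟩)).smul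
      (by positivity)

theorem IsPosDefKernelOn.mixed_pderiv {Ω : Set ℝ} (hΩ : IsOpen Ω) {n : ℕ}
    {k : ℝ × ℝ → ℂ} (hpd : IsPosDefKernelOn Ω k) (hs : IsClassSn n (Ω ×ˢ Ω) k) {m : ℕ}
    (hm : m ≤ n) : IsPosDefKernelOn Ω (pderiv2^[m] (pderiv1^[m] k)) := by
  induction m with
  | zero => exact hpd
  | succ m ih => exact mixed_pderiv_succ hΩ hs hm (ih (by omega))

/-- If `k` is a positive definite kernel on an open `Ω ⊆ ℝ` of class
`S_n(Ω²)`, then for `0 ≤ m ≤ n` the kernel `k_m = ∂^{2m} k / ∂y^m ∂x^m` is a positive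
definite kernel on `Ω` of class `S_{n−m}(Ω²)`. -/
theorem stmt9 (Ω : Set ℝ) (hΩ : IsOpen Ω) (n : ℕ) (k : ℝ × ℝ → ℂ)
    (hpd : IsPosDefKernelOn Ω k) (hs : IsClassSn n (Ω ×ˢ Ω) k) :
    ∀ m ≤ n,
      IsPosDefKernelOn Ω (pderiv2^[m] (pderiv1^[m] k)) ∧
      IsClassSn (n - m) (Ω ×ˢ Ω) (pderiv2^[m] (pderiv1^[m] k)) :=
  fun _ hm => ⟨hpd.mixed_pderiv hΩ hs hm, hs.mixed_pderiv (hΩ.prod hΩ) hm⟩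
end
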